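/- Suppose P, Q ∈ Ẽ(K[ε])[p] with Q = nP + R for some R ∈ Θ, and suppose the non-degenerate bilinear antisymmetric pairing e_p satisfies e_p(P, O₁) = 1 + aε with a ≠ 0 and e_p(Q, O₁) = 1 + bε. Then n ≡ b·a^{-1} mod p; i.e., the discrete logarithm n is determined by b/a in K. -/

import Mathlib

noncomputable section
open scoped Classical

/-- The inclusion `K → K[ε]` of the base ring into the dual numbers. -/
abbrev ιD {K : Type*} [CommRing K] (a : K) : DualNumber K := TrivSqZeroExt.inl a

/-- The element `ε` of the dual numbers `K[ε]`. -/
abbrev εD (K : Type*) [CommRing K] : DualNumber K := DualNumber.eps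

/-- A projective coordinate triple `(X, Y, Z)`. -/
abbrev Pt (R : Type*) := R × R × R

/-- The projective Weierstrass equation `Y²Z = X³ + A·XZ² + B·Z³` for the curve
`y² = x³ + Ax + B`. -/
def OnCurve {R : Type*} [CommRing R] (A B : R) (P : Pt R) : Prop :=
  P.2.1 ^ 2 * P.2.2 = P.1 ^ 3 + A * P.1 * P.2.2 ^ 2 + B * P.2.2 ^ 3

/-- The standard projective addition law on the Weierstrass curve
`y² = x³ + Ax + B`, written via the complete addition formulas
(valid over any commutative ring, agreeing with the usual chord–tangent law). -/
def padd {R : Type*} [CommRing R] (A B : R) (P Q : Pt R) : Pt R :=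
  let X1 := P.1; let Y1 := P.2.1; let Z1 := P.2.2
  let X2 := Q.1; let Y2 := Q.2.1; let Z2 := Q.2.2
  let b3 := 3 * B
  ((X1 * Y2 + X2 * Y1) * (Y1 * Y2 - A * (X1 * Z2 + X2 * Z1) - b3 * Z1 * Z2)
      - (Y1 * Z2 + Y2 * Z1) * (A * X1 * X2 + b3 * (X1 * Z2 + X2 * Z1) - A ^ 2 * Z1 * Z2),
    (3 * X1 * X2 + A * Z1 * Z2) * (A * X1 * X2 + b3 * (X1 * Z2 + X2 * Z1) - A ^ 2 * Z1 * Z2)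
      + (Y1 * Y2 + A * (X1 * Z2 + X2 * Z1) + b3 * Z1 * Z2)
        * (Y1 * Y2 - A * (X1 * Z2 + X2 * Z1) - b3 * Z1 * Z2),
    (Y1 * Z2 + Y2 * Z1) * (Y1 * Y2 + A * (X1 * Z2 + X2 * Z1) + b3 * Z1 * Z2)
      + (X1 * Y2 + X2 * Y1) * (3 * X1 * X2 + A * Z1 * Z2))

/-- The `n`-fold sum `n • P` on the curve, starting from the identity `(0 : 1 : 0)`. -/
def pmul {R : Type*} [CommRing R] (A B : R) (n : ℕ) (P : Pt R) : Pt R :=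
  (fun Q => padd A B Q P)^[n] (0, 1, 0)

/-- Equality of projective points: the coordinates agree up to a unit scalar. -/
def ProjEq {R : Type*} [CommRing R] (P Q : Pt R) : Prop :=
  ∃ u : Rˣ, Q = ((u : R) * P.1, (u : R) * P.2.1, (u : R) * P.2.2)

/-- The point at infinity `O_k = (kε : 1 : 0)` of the lift of the curve to `K[ε]`. -/
def Oinf {K : Type*} [CommRing K] (k : K) : Pt (DualNumber K) :=
  (ιD k * εD K, 1, 0)

lemma pow_one_add_eps {K : Type*} [CommRing K] (a : K) (n : ℕ) :
    (1 + ιD a * εD K) ^ n = 1 + ιD ((n : K) * a) * εD K := by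
  induction n with
  | zero => simp
  | succ n ih =>
    rw [pow_succ, ih]
    ext <;> simp [mul_comm] <;> ring

/-- if `Q = nP + R` with `R ∈ Θ`, and the pairing with `O₁` (a
homomorphism to `μ_p(K[ε])`, trivial on `Θ`) has values `e(P) = 1 + aε` with
`a ≠ 0` and `e(Q) = 1 + bε`, then `n ≡ b·a⁻¹ mod p`, i.e. `(n : K) = b * a⁻¹`. -/
theorem dlp_from_pairing (K : Type*) [Field K] [IsAlgClosed K]
    (p : ℕ) [CharP K p] (hp : p.Prime)
    (G : Type*) [AddCommGroup G] (Θ : AddSubgroup G)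
    (e : G → DualNumber K)
    (hhom : ∀ x y : G, e (x + y) = e x * e y)
    (hΘ : ∀ R ∈ Θ, e R = 1)
    (P Q R : G) (n : ℕ) (hR : R ∈ Θ) (hQ : Q = n • P + R)
    (a b : K) (ha : e P = 1 + ιD a * εD K) (hb : e Q = 1 + ιD b * εD K)
    (ha0 : a ≠ 0) :
    (n : K) = b * a⁻¹ := by
  have h0 : e 0 = 1 := hΘ 0 Θ.zero_mem
  have hsm : ∀ m : ℕ, e (m • P) = (e P) ^ m := by
    intro m
    induction m with
    | zero => simpa using h0
    | succ m ih => rw [succ_nsmul, hhom, ih, pow_succ]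
  have heq : e Q = (e P) ^ n := by
    rw [hQ, hhom, hΘ R hR, mul_one, hsm]
  rw [hb, ha, pow_one_add_eps] at heq
  have hba : b = (n : K) * a := by
    have := congrArg TrivSqZeroExt.snd heq
    simpa using this
  field_simp [hba, mul_comm]
  exact hba.symm
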